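/- arXiv:2309.13062 — 2 statements merged into one kernel-verified Lean document; each statement's English description precedes it below -/
import Mathlib

section
/- If A and B are real intervals, then the ordered pair (A, B) satisfies the UC property in (ℝ, |·|). -/
open Filter

/-- dist(A,B) = inf {|a−b| : a ∈ A, b ∈ B} -/
noncomputable def setDist (A B : Set ℝ) : ℝ :=
  sInf (Set.image2 dist A B)

lemma key_abs (d ε u v : ℝ) (h1 : d ≤ |u|) (h2 : d ≤ |v|)
    (h3 : |u| ≤ d + ε) (h4 : |v| ≤ d + ε) (h5 : 2 * d ≤ |u + v|) :
    |u - v| ≤ 3 * ε := by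
  rcases abs_cases u with ⟨hu, _⟩ | ⟨hu, _⟩ <;>
  rcases abs_cases v with ⟨hv, _⟩ | ⟨hv, _⟩ <;>
  rcases abs_cases (u + v) with ⟨huv, _⟩ | ⟨huv, _⟩ <;>
  rcases abs_cases (u - v) with ⟨huv', _⟩ | ⟨huv', _⟩ <;>
  linarith

theorem stmt_6 (A B : Set ℝ) (hA : A.OrdConnected) (hB : B.OrdConnected) :
    ∀ (x z y : ℕ → ℝ), (∀ n, x n ∈ A) → (∀ n, z n ∈ A) → (∀ n, y n ∈ B) →
      Tendsto (fun n => |x n - y n|) atTop (nhds (setDist A B)) →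
      Tendsto (fun n => |z n - y n|) atTop (nhds (setDist A B)) →
      Tendsto (fun n => |x n - z n|) atTop (nhds 0) := by
  intro x z y hx hz hy htx htz
  set d := setDist A B with hd
  have hbdd : BddBelow (Set.image2 dist A B) := by
    refine ⟨0, fun r hr => ?_⟩
    obtain ⟨p, _, q, _, rfl⟩ := hr
    exact dist_nonneg
  have hle : ∀ a ∈ A, ∀ b ∈ B, d ≤ |a - b| := by
    intro a ha b hb
    have := csInf_le hbdd (Set.mem_image2_of_mem ha hb)
    rwa [Real.dist_eq] at this
  -- key pointwise estimate
  have key : ∀ ε > 0, ∀ a ∈ A, ∀ a' ∈ A, ∀ b ∈ B,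
      |a - b| ≤ d + ε → |a' - b| ≤ d + ε → |a - a'| ≤ 3 * ε := by
    intro ε hε a ha a' ha' b hb h1 h2
    have hm : (a + a') / 2 ∈ A := by
      rcases le_total a a' with h | h
      · exact hA.out ha ha' ⟨by linarith, by linarith⟩
      · exact hA.out ha' ha ⟨by linarith, by linarith⟩
    have hdm : d ≤ |(a + a') / 2 - b| := hle _ hm _ hb
    have h5 : 2 * d ≤ |(a - b) + (a' - b)| := by
      have : (a - b) + (a' - b) = 2 * ((a + a') / 2 - b) := by ring
      rw [this, abs_mul]
      simp only [abs_two]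
      linarith
    have := key_abs d ε (a - b) (a' - b) (hle _ ha _ hb) (hle _ ha' _ hb) h1 h2 h5
    have heq : (a - b) - (a' - b) = a - a' := by ring
    rwa [heq] at this
  rw [Metric.tendsto_atTop] at htx htz ⊢
  intro ε hε
  obtain ⟨N1, hN1⟩ := htx (ε / 4) (by linarith)
  obtain ⟨N2, hN2⟩ := htz (ε / 4) (by linarith)
  refine ⟨max N1 N2, fun n hn => ?_⟩
  have h1 := hN1 n (le_trans (le_max_left _ _) hn)
  have h2 := hN2 n (le_trans (le_max_right _ _) hn)
  rw [Real.dist_eq] at h1 h2 ⊢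
  have hb1 : |x n - y n| ≤ d + ε / 4 := by
    have := abs_le.mp h1.le
    linarith [this.2]
  have hb2 : |z n - y n| ≤ d + ε / 4 := by
    have := abs_le.mp h2.le
    linarith [this.2]
  have := key (ε / 4) (by linarith) (x n) (hx n) (z n) (hz n) (y n) (hy n) hb1 hb2
  rw [sub_zero, abs_abs]
  linarith
end

section
/- Let T : [0,∞) → [0,∞) be defined by Tx = 2x·α(x) + (1/4)(x − 2^{⌊log₂ x⌋})(1 − α(x)) for x > 0 and T0 = 0, where α(x) = ⌊log₂ x⌋ mod 2 for x > 0 and α(0) = 0 (with the convention 2^{⌊log₂ 0⌋} = 0). Then for every a ≥ 0, the sequence {Tⁿa} converges to 0, and x = 0 is the unique fixed point of T in the set 𝕃 = {x ≥ 0 : α(x) = 0}. -/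
open Filter

/-- α(x) = ⌊log₂ x⌋ mod 2 for x > 0 and α(0) = 0. -/
noncomputable def alphaFn (x : ℝ) : ℝ :=
  if 0 < x then ((⌊Real.logb 2 x⌋ % 2 : ℤ) : ℝ) else 0

/-- Tx = 2x·α(x) + (1/4)(x − 2^⌊log₂ x⌋)(1 − α(x)) for x > 0, T0 = 0
(with the convention 2^⌊log₂ 0⌋ = 0). -/
noncomputable def Tmap (x : ℝ) : ℝ :=
  if 0 < x then
    2 * x * alphaFn x + (1 / 4) * (x - (2 : ℝ) ^ (⌊Real.logb 2 x⌋ : ℤ)) * (1 - alphaFn x)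
  else 0

lemma pow_floor_le {x : ℝ} (hx : 0 < x) : (2:ℝ) ^ (⌊Real.logb 2 x⌋ : ℤ) ≤ x := by
  have h := Real.rpow_logb (by norm_num : (0:ℝ) < 2) (by norm_num) hx
  calc (2:ℝ) ^ (⌊Real.logb 2 x⌋ : ℤ) = (2:ℝ) ^ ((⌊Real.logb 2 x⌋ : ℝ)) := by
        rw [Real.rpow_intCast]
    _ ≤ (2:ℝ) ^ (Real.logb 2 x) :=
        Real.rpow_le_rpow_of_exponent_le (by norm_num) (Int.floor_le _)
    _ = x := h

lemma lt_two_pow_floor {x : ℝ} (hx : 0 < x) : x < 2 * (2:ℝ) ^ (⌊Real.logb 2 x⌋ : ℤ) := by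
  have h := Real.rpow_logb (by norm_num : (0:ℝ) < 2) (by norm_num) hx
  calc x = (2:ℝ) ^ (Real.logb 2 x) := h.symm
    _ < (2:ℝ) ^ ((⌊Real.logb 2 x⌋:ℝ) + 1) :=
        Real.rpow_lt_rpow_of_exponent_lt (by norm_num) (Int.lt_floor_add_one _)
    _ = 2 * (2:ℝ)^(⌊Real.logb 2 x⌋:ℤ) := by
        rw [Real.rpow_add (by norm_num), Real.rpow_one, Real.rpow_intCast]; ring

lemma alpha_cases (x : ℝ) : alphaFn x = 0 ∨ alphaFn x = 1 := by
  unfold alphaFn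
  split
  · rcases Int.emod_two_eq ⌊Real.logb 2 x⌋ with h | h <;> simp [h]
  · left; rfl

lemma T0eq {x : ℝ} (hx : 0 < x) (h : alphaFn x = 0) :
    Tmap x = (x - (2:ℝ)^(⌊Real.logb 2 x⌋:ℤ)) / 4 := by
  unfold Tmap; rw [if_pos hx, h]; ring

lemma T1eq {x : ℝ} (hx : 0 < x) (h : alphaFn x = 1) : Tmap x = 2 * x := by
  unfold Tmap; rw [if_pos hx, h]; ring

lemma T0_bounds {x : ℝ} (hx : 0 < x) (h : alphaFn x = 0) :
    0 ≤ Tmap x ∧ Tmap x ≤ x / 8 := by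
  rw [T0eq hx h]
  have h1 := pow_floor_le hx
  have h2 := lt_two_pow_floor hx
  constructor <;> linarith

lemma T_nonneg {x : ℝ} (hx : 0 ≤ x) : 0 ≤ Tmap x := by
  rcases eq_or_lt_of_le hx with h0 | hpos
  · simp [Tmap, ← h0]
  rcases alpha_cases x with ha | ha
  · exact (T0_bounds hpos ha).1
  · rw [T1eq hpos ha]; linarith

lemma T_le_two {x : ℝ} (hx : 0 ≤ x) : Tmap x ≤ 2 * x := by
  rcases eq_or_lt_of_le hx with h0 | hpos
  · simp [Tmap, ← h0]
  rcases alpha_cases x with ha | ha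
  · have := (T0_bounds hpos ha).2; linarith
  · rw [T1eq hpos ha]

lemma alpha_two_mul {x : ℝ} (hx : 0 < x) (h : alphaFn x = 1) : alphaFn (2*x) = 0 := by
  have h2x : 0 < 2*x := by linarith
  have hlog : Real.logb 2 (2*x) = Real.logb 2 x + 1 := by
    rw [Real.logb_mul (by norm_num) (ne_of_gt hx)]
    have h22 : Real.logb 2 2 = 1 := by
      simp [Real.logb_self_eq_one]
    rw [h22]; ring
  have hodd : ⌊Real.logb 2 x⌋ % 2 = 1 := by
    unfold alphaFn at h
    rw [if_pos hx] at h
    exact_mod_cast h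
  unfold alphaFn
  rw [if_pos h2x, hlog, Int.floor_add_one]
  have heven : (⌊Real.logb 2 x⌋ + 1) % 2 = 0 := by omega
  rw [heven]; simp

lemma TT_le {x : ℝ} (hx : 0 ≤ x) : Tmap (Tmap x) ≤ x / 4 := by
  rcases eq_or_lt_of_le hx with h0 | hpos
  · simp [Tmap, ← h0]
  rcases alpha_cases x with ha | ha
  · have hb := T0_bounds hpos ha
    have h2 := T_le_two hb.1
    linarith
  · rw [T1eq hpos ha]
    have h2x : 0 < 2*x := by linarith
    have := (T0_bounds h2x (alpha_two_mul hpos ha)).2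
    linarith

theorem stmt_16 :
    (∀ a : ℝ, 0 ≤ a → Tendsto (fun n => Tmap^[n] a) atTop (nhds 0)) ∧
    Tmap 0 = 0 ∧ alphaFn 0 = 0 ∧ 0 ≤ (0 : ℝ) ∧
    (∀ x : ℝ, 0 ≤ x → alphaFn x = 0 → Tmap x = x → x = 0) := by
  refine ⟨?_, by simp [Tmap], by simp [alphaFn], le_refl _, ?_⟩
  · intro a ha
    have key : ∀ n : ℕ, (0 ≤ Tmap^[n] a ∧ Tmap^[n] a ≤ 4*a/2^n) ∧
        (0 ≤ Tmap^[n+1] a ∧ Tmap^[n+1] a ≤ 4*a/2^(n+1)) := by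
      intro n
      induction n with
      | zero =>
        refine ⟨⟨by simpa using ha, by simpa using by linarith⟩, ?_⟩
        have h1 : Tmap^[1] a = Tmap a := by simp
        rw [h1]
        exact ⟨T_nonneg ha, by have := T_le_two ha; norm_num; linarith⟩
      | succ n ih =>
        refine ⟨ih.2, ?_⟩
        have h2 : Tmap^[n+2] a = Tmap (Tmap (Tmap^[n] a)) := by
          rw [Function.iterate_succ_apply', Function.iterate_succ_apply']
        constructor
        · rw [Function.iterate_succ_apply']
          exact T_nonneg ih.2.1
        · rw [h2]
          have h3 := TT_le ih.1.1
          have h4 := ih.1.2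
          have h5 : (4:ℝ)*a/2^(n+2) = (4*a/2^n)/4 := by ring
          rw [h5]
          linarith
    have hb : ∀ n : ℕ, Tmap^[n] a ≤ 4*a * (1/2:ℝ)^n := fun n => by
      have e : (1/2:ℝ)^n = 1/2^n := by rw [div_pow, one_pow]
      rw [e, mul_one_div]
      exact (key n).1.2
    have hlim : Tendsto (fun n : ℕ => 4*a * (1/2:ℝ)^n) atTop (nhds 0) := by
      have := (tendsto_pow_atTop_nhds_zero_of_lt_one (by norm_num : (0:ℝ) ≤ 1/2)
        (by norm_num : (1/2:ℝ) < 1)).const_mul (4*a)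
      simpa using this
    exact squeeze_zero (fun n => (key n).1.1) hb hlim
  · intro x hx h0 hfix
    by_contra hne
    have hpos : 0 < x := lt_of_le_of_ne hx (Ne.symm hne)
    have := (T0_bounds hpos h0).2
    rw [hfix] at this
    linarith
end
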